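/- arXiv:2302.11155 — 10 statements merged into one kernel-verified Lean document; each statement's English description precedes it below -/
import Mathlib

section
/- Let α, γ, c₀, c₁, c₂, c₃, ε, A, V, β be real numbers with ε ≠ 0, and let ω : ℝ → ℝ be three times differentiable and satisfy, for every η ∈ ℝ, the second-order ODE β²(γ + α²V − c₃Aω(η))ω''(η) = β²c₂A(ω'(η))² + (V − c₀)ω(η) − c₁A²ω(η)³. Then the traveling wave u(x,t) = A·ω(β(x − Vt)/ε) is a classical solution of the gmKdV equation, i.e. ∂_t(u − α²ε²∂²_x u) + ∂_x(c₀u + c₁u³ − c₂ε²(∂_x u)² + ε²(γ − c₃u)∂²_x u) = 0 holds pointwise on ℝ × ℝ. -/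
/-! With `k = β / ε` and `p = -k V`, the wave is `u x t = g (k x + p t)` for `g = A ω`, so the
density `u - α² ε² ∂ₓ² u` and the flux of the gmKdV equation are profiles `P`, `Q` evaluated at
the wave variable, and the equation reads `p P' + k Q' = 0`. Since `k² ε² = β²`, the integrated
relation `k Q + p P = 0` is the traveling-wave ODE multiplied by `β A / ε`. -/

section TravelingWave

variable {𝕜 E : Type*} [NontriviallyNormedField 𝕜] [NormedAddCommGroup E] [NormedSpace 𝕜 E]

theorem deriv_comp_mul_add (f : 𝕜 → E) (c b x : 𝕜) :
    deriv (fun y => f (c * y + b)) x = c • deriv f (c * x + b) := by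
  rw [deriv_comp_mul_left c (fun z => f (z + b)) x, deriv_comp_add_const]

theorem deriv_comp_add_deriv_comp_eq_zero {P Q : 𝕜 → E} {k p : 𝕜} {C : E}
    (h : ∀ ξ, k • Q ξ + p • P ξ = C) (x t : 𝕜) :
    deriv (fun s => P (k * x + p * s)) t + deriv (fun y => Q (k * y + p * t)) x = 0 := by
  have hflux : k • deriv Q = -(p • deriv P) := by
    have hQ : k • Q = fun ξ => C - p • P ξ := funext fun ξ => eq_sub_of_add_eq (h ξ)
    ext ξ
    rw [Pi.smul_apply, ← deriv_const_smul_field, hQ, deriv_const_sub, deriv_fun_const_smul_field]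
    rfl
  simp only [add_comm (k * x), deriv_comp_mul_add]
  rw [add_comm (p * t), ← Pi.smul_apply k (deriv Q), hflux, Pi.neg_apply, Pi.smul_apply,
    add_neg_cancel]

end TravelingWave

theorem gmKdV_traveling_wave_solution_general
    (α γ c₀ c₁ c₂ c₃ ε A V β : ℝ) (hε : ε ≠ 0)
    (ω : ℝ → ℝ)
    (hODE : ∀ η : ℝ,
      β ^ 2 * (γ + α ^ 2 * V - c₃ * A * ω η) * deriv (deriv ω) η =
        β ^ 2 * c₂ * A * (deriv ω η) ^ 2 + (V - c₀) * ω η - c₁ * A ^ 2 * (ω η) ^ 3)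
    (u : ℝ → ℝ → ℝ)
    (hu : ∀ x t : ℝ, u x t = A * ω (β * (x - V * t) / ε)) :
    ∀ x t : ℝ,
      deriv (fun s : ℝ =>
          u x s - α ^ 2 * ε ^ 2 * deriv (fun y => deriv (fun z => u z s) y) x) t
        + deriv (fun y : ℝ =>
            c₀ * u y t + c₁ * (u y t) ^ 3
              - c₂ * ε ^ 2 * (deriv (fun z => u z t) y) ^ 2
              + ε ^ 2 * (γ - c₃ * u y t) * deriv (fun z => deriv (fun w => u w t) z) y) x
          = 0 := by
  intro x t
  set k := β / ε
  set g : ℝ → ℝ := fun η => A * ω η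
  have hwave : ∀ y s, u y s = g (k * y + -(k * V) * s) := fun y s => by
    rw [hu]; congr 2; ring
  simp only [hwave, deriv_comp_mul_add, deriv_const_mul_field', smul_eq_mul]
  refine deriv_comp_add_deriv_comp_eq_zero (C := 0)
    (P := fun η => g η - α ^ 2 * ε ^ 2 * (k * (k * deriv (deriv g) η)))
    (Q := fun η => c₀ * g η + c₁ * g η ^ 3 - c₂ * ε ^ 2 * (k * deriv g η) ^ 2
      + ε ^ 2 * (γ - c₃ * g η) * (k * (k * deriv (deriv g) η))) (fun η => ?_) x t
  simp only [g, k, deriv_const_mul_field', smul_eq_mul]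
  field_simp
  linear_combination (β * A) * hODE η

/-- If `ω` is three times differentiable and satisfies the once-integrated
traveling-wave ODE, then `u(x,t) = A·ω(β(x − Vt)/ε)` is a classical solution of the
gmKdV equation pointwise on ℝ × ℝ. -/
theorem gmKdV_traveling_wave_solution
    (α γ c₀ c₁ c₂ c₃ ε A V β : ℝ) (hε : ε ≠ 0)
    (ω : ℝ → ℝ)
    (hω1 : Differentiable ℝ ω)
    (hω2 : Differentiable ℝ (deriv ω))
    (hω3 : Differentiable ℝ (deriv (deriv ω)))
    (hODE : ∀ η : ℝ,
      β ^ 2 * (γ + α ^ 2 * V - c₃ * A * ω η) * deriv (deriv ω) η =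
        β ^ 2 * c₂ * A * (deriv ω η) ^ 2 + (V - c₀) * ω η - c₁ * A ^ 2 * (ω η) ^ 3)
    (u : ℝ → ℝ → ℝ)
    (hu : ∀ x t : ℝ, u x t = A * ω (β * (x - V * t) / ε)) :
    ∀ x t : ℝ,
      deriv (fun s : ℝ =>
          u x s - α ^ 2 * ε ^ 2 * deriv (fun y => deriv (fun z => u z s) y) x) t
        + deriv (fun y : ℝ =>
            c₀ * u y t + c₁ * (u y t) ^ 3
              - c₂ * ε ^ 2 * (deriv (fun z => u z t) y) ^ 2
              + ε ^ 2 * (γ - c₃ * u y t) * deriv (fun z => deriv (fun w => u w t) z) y) x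
          = 0 :=
  gmKdV_traveling_wave_solution_general α γ c₀ c₁ c₂ c₃ ε A V β hε ω hODE u hu
end

section
/- Fix r ∈ (0,1) and q ∈ ℝ, and let F and C be as defined. Let I ⊆ ℝ be an open interval and g : I → ℝ a twice differentiable function with g(η) > 0 for all η ∈ I, satisfying (g'(η))² = F(g(η), q) and g''(η) = (1/2)·∂F/∂g(g(η), q) for all η ∈ I. Then the function W(η) = 1 − g(η)^r satisfies (1 − W)W'' = ((1 − r)/r)(W')² + r(qW − W³) on I. -/
/-- The integration constant `C(q)` (for fixed `r`). -/
noncomputable def Ccoef (r q : ℝ) : ℝ := r * (3 * r ^ 2 - q * (2 + r)) / ((1 - r) * (4 - r ^ 2))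

/-- The right-hand side `F(g,q)` of the reduced first-order ODE (for fixed `r`),
with real powers `g ^ s = exp(s log g)` for `g > 0`. -/
noncomputable def Ffun (r q g : ℝ) : ℝ :=
  (1 - q) / (1 - r) * g ^ (2 - 2 * r) - 2 * (3 - q) / (2 - r) * g ^ (2 - r)
    + 3 * g ^ (2 : ℝ) - 2 / (2 + r) * g ^ (2 + r) - Ccoef r q

/-!
For `W = 1 - g ^ r` one has `W' = -r g^(r-1) g'` and
`W'' = -r ((r-1) g^(r-2) g'² + g^(r-1) g'')`, so in `(1 - W) W''` the `g'²` term is exactly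
`((1-r)/r) W'²` and what remains is `-r g^(2r-1) g''`. Substituting
`g'' = F_g(g)/2` and multiplying out the powers turns `g^(2r-1) F_g(g)/2` into the cubic
`W³ - q W` in `W`.
-/

open Real

section OneSubRpow

variable {g g' g'' : ℝ → ℝ} {r : ℝ}

theorem hasDerivAt_one_sub_rpow {d t : ℝ} (hg : HasDerivAt g d t) (hpos : 0 < g t) :
    HasDerivAt (fun s => 1 - g s ^ r) (-(r * g t ^ (r - 1) * d)) t := by
  simpa using ((hasDerivAt_rpow_const (p := r) (Or.inl hpos.ne')).comp t hg).const_sub 1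

variable {U : Set ℝ} (hU : IsOpen U) (hpos : ∀ t ∈ U, 0 < g t)
  (hg' : ∀ t ∈ U, HasDerivAt g (g' t) t) (hg'' : ∀ t ∈ U, HasDerivAt g' (g'' t) t)
include hU hpos hg' hg''

theorem deriv_deriv_one_sub_rpow {η : ℝ} (hη : η ∈ U) :
    deriv (deriv fun s => 1 - g s ^ r) η =
      -(r * ((r - 1) * g η ^ (r - 2) * g' η ^ 2 + g η ^ (r - 1) * g'' η)) := by
  have hderiv : deriv (fun s => 1 - g s ^ r) =ᶠ[nhds η] fun t => -(r * g t ^ (r - 1) * g' t) :=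
    Filter.eventuallyEq_of_mem (hU.mem_nhds hη) fun t ht =>
      (hasDerivAt_one_sub_rpow (hg' t ht) (hpos t ht)).deriv
  have hpow : HasDerivAt (fun s => g s ^ (r - 1)) ((r - 1) * g η ^ (r - 2) * g' η) η := by
    have h := (hasDerivAt_rpow_const (p := r - 1) (Or.inl (hpos η hη).ne')).comp η (hg' η hη)
    rwa [show r - 1 - 1 = r - 2 by ring] at h
  refine (HasDerivAt.congr_of_eventuallyEq ?_ hderiv).deriv
  convert ((hpow.mul (hg'' η hη)).const_mul r).neg using 1
  · ext t; simp only [Pi.neg_apply, Pi.mul_apply]; ring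
  · ring

theorem rpow_mul_deriv_deriv_one_sub_rpow (hr : r ≠ 0) {η : ℝ} (hη : η ∈ U) :
    g η ^ r * deriv (deriv fun s => 1 - g s ^ r) η =
      (1 - r) / r * deriv (fun s => 1 - g s ^ r) η ^ 2 - r * g η ^ (2 * r - 1) * g'' η := by
  have hx := hpos η hη
  rw [deriv_deriv_one_sub_rpow hU hpos hg' hg'' hη,
    (hasDerivAt_one_sub_rpow (hg' η hη) hx).deriv]
  have hsq : g η ^ r * g η ^ (r - 2) = g η ^ (r - 1) * g η ^ (r - 1) := by
    rw [← rpow_add hx, ← rpow_add hx]; ring_nf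
  have hlin : g η ^ r * g η ^ (r - 1) = g η ^ (2 * r - 1) := by
    rw [← rpow_add hx]; ring_nf
  have hsquare : (1 - r) / r * (-(r * g η ^ (r - 1) * g' η)) ^ 2 =
      (1 - r) * r * (g η ^ (r - 1) * g η ^ (r - 1)) * g' η ^ 2 := by
    field_simp
  rw [hsquare]
  linear_combination (r * (1 - r) * g' η ^ 2) * hsq - r * g'' η * hlin

end OneSubRpow

theorem hasDerivAt_Ffun {r q x : ℝ} (h1 : r ≠ 1) (h2 : r ≠ 2) (h3 : r ≠ -2) (hx : 0 < x) :
    HasDerivAt (Ffun r q)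
      (2 * ((1 - q) * x ^ (1 - 2 * r) - (3 - q) * x ^ (1 - r) + 3 * x - x ^ (1 + r))) x := by
  have hpow (p : ℝ) := hasDerivAt_rpow_const (p := p) (Or.inl hx.ne')
  refine (((((hpow (2 - 2 * r)).const_mul ((1 - q) / (1 - r))).sub
    ((hpow (2 - r)).const_mul (2 * (3 - q) / (2 - r)))).add ((hpow 2).const_mul 3)).sub
    ((hpow (2 + r)).const_mul (2 / (2 + r)))).sub_const (Ccoef r q) |>.congr_deriv ?_
  have h1' : 1 - r ≠ 0 := sub_ne_zero.2 h1.symm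
  have h2' : 2 - r ≠ 0 := sub_ne_zero.2 h2.symm
  have h3' : 2 + r ≠ 0 := by contrapose! h3; linarith
  rw [show 2 - 2 * r - 1 = 1 - 2 * r by ring, show 2 - r - 1 = 1 - r by ring,
    show (2 : ℝ) - 1 = 1 by ring, show 2 + r - 1 = 1 + r by ring, rpow_one]
  field_simp

theorem rpow_mul_half_deriv_Ffun {r q x : ℝ} (h1 : r ≠ 1) (h2 : r ≠ 2) (h3 : r ≠ -2)
    (hx : 0 < x) :
    x ^ (2 * r - 1) * (1 / 2 * deriv (Ffun r q) x) = (1 - x ^ r) ^ 3 - q * (1 - x ^ r) := by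
  have e0 : x ^ (2 * r - 1) * x ^ (1 - 2 * r) = 1 := by
    rw [← rpow_add hx]; ring_nf; exact rpow_zero x
  have e1 : x ^ (2 * r - 1) * x ^ (1 - r) = x ^ r := by
    rw [← rpow_add hx]; ring_nf
  have e2 : x ^ (2 * r - 1) * x = x ^ r * x ^ r := by
    rw [← rpow_add_one hx.ne', ← rpow_add hx]; ring_nf
  have e3 : x ^ (2 * r - 1) * x ^ (1 + r) = x ^ r * x ^ r * x ^ r := by
    simp only [← rpow_add hx]; ring_nf
  rw [(hasDerivAt_Ffun h1 h2 h3 hx).deriv]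
  linear_combination (1 - q) * e0 - (3 - q) * e1 + 3 * e2 - e3

theorem gmKdV_W_equation_from_g_general
    (r q : ℝ) (hr : r ∈ Set.Ioo (0 : ℝ) 1)
    (a b : ℝ) (I : Set ℝ) (hI : I = Set.Ioo a b)
    (g : ℝ → ℝ) (g' g'' : ℝ → ℝ)
    (hgpos : ∀ η ∈ I, g η > 0)
    (hg' : ∀ η ∈ I, HasDerivAt g (g' η) η)
    (hg'' : ∀ η ∈ I, HasDerivAt g' (g'' η) η)
    (hODE2 : ∀ η ∈ I, g'' η = (1 / 2) * deriv (fun x => Ffun r q x) (g η))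
    (W : ℝ → ℝ) (hW : W = fun η => 1 - g η ^ r) :
    ∀ η ∈ I,
      (1 - W η) * deriv (deriv W) η =
        (1 - r) / r * (deriv W η) ^ 2 + r * (q * W η - (W η) ^ 3) := by
  intro η hη
  obtain ⟨hr0, hr1⟩ := hr
  have hcubic := rpow_mul_half_deriv_Ffun (q := q) hr1.ne (by linarith) (by linarith) (hgpos η hη)
  rw [← hODE2 η hη] at hcubic
  subst hW hI
  rw [sub_sub_cancel, rpow_mul_deriv_deriv_one_sub_rpow isOpen_Ioo hgpos hg' hg'' hr0.ne' hη]
  linear_combination -r * hcubic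

/-- If `g > 0` solves `(g')² = F(g,q)` and `g'' = (1/2)∂F/∂g(g,q)` on an
open interval `I`, then `W = 1 − g^r` solves `(1 − W)W'' = ((1−r)/r)(W')² + r(qW − W³)` on `I`. -/
theorem gmKdV_W_equation_from_g
    (r q : ℝ) (hr : r ∈ Set.Ioo (0 : ℝ) 1)
    (a b : ℝ) (I : Set ℝ) (hI : I = Set.Ioo a b)
    (g : ℝ → ℝ) (g' g'' : ℝ → ℝ)
    (hgpos : ∀ η ∈ I, g η > 0)
    (hg' : ∀ η ∈ I, HasDerivAt g (g' η) η)
    (hg'' : ∀ η ∈ I, HasDerivAt g' (g'' η) η)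
    (hODE1 : ∀ η ∈ I, (g' η) ^ 2 = Ffun r q (g η))
    (hODE2 : ∀ η ∈ I, g'' η = (1 / 2) * deriv (fun x => Ffun r q x) (g η))
    (W : ℝ → ℝ) (hW : W = fun η => 1 - g η ^ r) :
    ∀ η ∈ I,
      (1 - W η) * deriv (deriv W) η =
        (1 - r) / r * (deriv W η) ^ 2 + r * (q * W η - (W η) ^ 3) :=
  gmKdV_W_equation_from_g_general r q hr a b I hI g g' g'' hgpos hg' hg'' hODE2 W hW
end

section
/- Fix r ∈ (0,1) and q ≥ 0, and let F and C be as defined. Then for every g > 0, the partial derivative of F with respect to g satisfies ∂F/∂g(g,q) = 2·g^{1−r}·(g^{−r} − 1)·(g^r − (1 − √q))·(g^r − (1 + √q)). -/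
/-- factorization of `∂F/∂g`:
`∂F/∂g(g,q) = 2·g^{1−r}·(g^{−r} − 1)·(g^r − (1 − √q))·(g^r − (1 + √q))` for all `g > 0`. -/
theorem gmKdV_dF_factorization
    (r q : ℝ) (hr : r ∈ Set.Ioo (0 : ℝ) 1) (hq : q ≥ 0) :
    ∀ g : ℝ, g > 0 →
      deriv (fun x => Ffun r q x) g =
        2 * g ^ (1 - r) * (g ^ (-r) - 1) * (g ^ r - (1 - Real.sqrt q))
          * (g ^ r - (1 + Real.sqrt q)) := by
  obtain ⟨hr0, hr1⟩ := hr
  intro g hg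
  have hgne : g ≠ 0 := ne_of_gt hg
  have hd : HasDerivAt (fun x : ℝ => Ffun r q x)
      ((1 - q) / (1 - r) * ((2 - 2 * r) * g ^ (2 - 2 * r - 1))
        - 2 * (3 - q) / (2 - r) * ((2 - r) * g ^ (2 - r - 1))
        + 3 * ((2 : ℝ) * g ^ ((2 : ℝ) - 1))
        - 2 / (2 + r) * ((2 + r) * g ^ (2 + r - 1)) - 0) g := by
    unfold Ffun
    exact (((((Real.hasDerivAt_rpow_const (p := 2 - 2 * r) (Or.inl hgne)).const_mul
        ((1 - q) / (1 - r))).sub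
      ((Real.hasDerivAt_rpow_const (p := 2 - r) (Or.inl hgne)).const_mul
        (2 * (3 - q) / (2 - r)))).add
      ((Real.hasDerivAt_rpow_const (p := 2) (Or.inl hgne)).const_mul 3)).sub
      ((Real.hasDerivAt_rpow_const (p := 2 + r) (Or.inl hgne)).const_mul (2 / (2 + r)))).sub
      (hasDerivAt_const g (Ccoef r q))
  rw [hd.deriv]
  set a := g ^ r with ha
  have hapos : (0 : ℝ) < a := Real.rpow_pos_of_pos hg r
  have hane : a ≠ 0 := ne_of_gt hapos
  have e6 : g ^ (-r) = a⁻¹ := by rw [ha, Real.rpow_neg hg.le]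
  have e1 : g ^ (2 - 2 * r - 1) = g * a⁻¹ * a⁻¹ := by
    rw [show (2 - 2 * r - 1 : ℝ) = 1 + -r + -r by ring, Real.rpow_add hg, Real.rpow_add hg,
      Real.rpow_one, e6]
  have e2 : g ^ (2 - r - 1) = g * a⁻¹ := by
    rw [show (2 - r - 1 : ℝ) = 1 + -r by ring, Real.rpow_add hg, Real.rpow_one, e6]
  have e3 : g ^ ((2 : ℝ) - 1) = g := by norm_num
  have e4 : g ^ (2 + r - 1) = g * a := by
    rw [show (2 + r - 1 : ℝ) = 1 + r by ring, Real.rpow_add hg, Real.rpow_one, ha]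
  have e5 : g ^ (1 - r) = g * a⁻¹ := by
    rw [show (1 - r : ℝ) = 1 + -r by ring, Real.rpow_add hg, Real.rpow_one, e6]
  have hs : Real.sqrt q ^ 2 = q := Real.sq_sqrt hq
  rw [e1, e2, e3, e4, e5, e6]
  set s := Real.sqrt q with hsd
  clear_value s
  rw [← hs]
  have h1 : (1 : ℝ) - r ≠ 0 := by linarith
  have h2 : (2 : ℝ) - r ≠ 0 := by linarith
  have h3 : (2 : ℝ) + r ≠ 0 := by linarith
  field_simp
  ring
end

section
/- Fix r ∈ (0,1) and q > 0, and let F and C be as defined. Then the second derivative of F in g satisfies: (i) ∂²F/∂g²(1, q) = 2rq > 0; (ii) ∂²F/∂g² evaluated at g = (1 + √q)^{1/r} equals −4rq/(1 + √q) < 0; and (iii) if in addition q < 1, then ∂²F/∂g² evaluated at g = (1 − √q)^{1/r} equals −4rq/(1 − √q) < 0. -/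
lemma deriv_Ffun (r q : ℝ) (hr : r ∈ Set.Ioo (0 : ℝ) 1) {x : ℝ} (hx : 0 < x) :
    deriv (fun g => Ffun r q g) x
      = 2 * (1 - q) * x ^ (2 - 2*r - 1) - 2 * (3 - q) * x ^ (2 - r - 1)
        + 6 * x ^ ((2:ℝ) - 1) - 2 * x ^ (2 + r - 1) := by
  obtain ⟨hr0, hr1⟩ := hr
  have ha := Real.hasDerivAt_rpow_const (x := x) (p := 2 - 2*r) (Or.inl hx.ne')
  have hb := Real.hasDerivAt_rpow_const (x := x) (p := 2 - r) (Or.inl hx.ne')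
  have hc := Real.hasDerivAt_rpow_const (x := x) (p := (2:ℝ)) (Or.inl hx.ne')
  have hd := Real.hasDerivAt_rpow_const (x := x) (p := 2 + r) (Or.inl hx.ne')
  have H : HasDerivAt (fun g => Ffun r q g)
      ((1 - q) / (1 - r) * ((2 - 2*r) * x ^ (2 - 2*r - 1))
        - 2 * (3 - q) / (2 - r) * ((2 - r) * x ^ (2 - r - 1))
        + 3 * ((2:ℝ) * x ^ ((2:ℝ) - 1))
        - 2 / (2 + r) * ((2 + r) * x ^ (2 + r - 1))) x := by
    unfold Ffun
    exact ((((ha.const_mul _).sub (hb.const_mul _)).add (hc.const_mul 3)).sub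
      (hd.const_mul _)).sub_const _
  rw [H.deriv]
  have h1 : (1:ℝ) - r ≠ 0 := by linarith
  have h2 : (2:ℝ) - r ≠ 0 := by linarith
  have h3 : (2:ℝ) + r ≠ 0 := by linarith
  field_simp
  ring

lemma deriv2_Ffun (r q : ℝ) (hr : r ∈ Set.Ioo (0 : ℝ) 1) {x : ℝ} (hx : 0 < x) :
    deriv (deriv (fun g => Ffun r q g)) x
      = 2 * (1 - q) * (2 - 2*r - 1) * x ^ (2 - 2*r - 1 - 1)
        - 2 * (3 - q) * (2 - r - 1) * x ^ (2 - r - 1 - 1)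
        + 6 - 2 * (2 + r - 1) * x ^ (2 + r - 1 - 1) := by
  obtain ⟨hr0, hr1⟩ := hr
  have hev : deriv (fun g => Ffun r q g) =ᶠ[nhds x]
      (fun y => 2 * (1 - q) * y ^ (2 - 2*r - 1) - 2 * (3 - q) * y ^ (2 - r - 1)
        + 6 * y ^ ((2:ℝ) - 1) - 2 * y ^ (2 + r - 1)) := by
    filter_upwards [eventually_gt_nhds hx] with y hy
    exact deriv_Ffun r q ⟨hr0, hr1⟩ hy
  rw [hev.deriv_eq]
  have ha := Real.hasDerivAt_rpow_const (x := x) (p := 2 - 2*r - 1) (Or.inl hx.ne')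
  have hb := Real.hasDerivAt_rpow_const (x := x) (p := 2 - r - 1) (Or.inl hx.ne')
  have hc := Real.hasDerivAt_rpow_const (x := x) (p := (2:ℝ) - 1) (Or.inl hx.ne')
  have hd := Real.hasDerivAt_rpow_const (x := x) (p := 2 + r - 1) (Or.inl hx.ne')
  have H : HasDerivAt (fun y => 2 * (1 - q) * y ^ (2 - 2*r - 1) - 2 * (3 - q) * y ^ (2 - r - 1)
        + 6 * y ^ ((2:ℝ) - 1) - 2 * y ^ (2 + r - 1))
      (2 * (1 - q) * ((2 - 2*r - 1) * x ^ (2 - 2*r - 1 - 1))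
        - 2 * (3 - q) * ((2 - r - 1) * x ^ (2 - r - 1 - 1))
        + 6 * (((2:ℝ) - 1) * x ^ ((2:ℝ) - 1 - 1))
        - 2 * ((2 + r - 1) * x ^ (2 + r - 1 - 1))) x :=
    (((ha.const_mul _).sub (hb.const_mul _)).add (hc.const_mul 6)).sub (hd.const_mul 2)
  rw [H.deriv]
  norm_num [Real.rpow_zero]
  ring

/-- values and signs of `∂²F/∂g²` at the critical points `g = 1`,
`g = (1 + √q)^{1/r}` and (when `q < 1`) `g = (1 − √q)^{1/r}`. -/
theorem gmKdV_second_derivative_signs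
    (r q : ℝ) (hr : r ∈ Set.Ioo (0 : ℝ) 1) (hq : q > 0) :
    (deriv (deriv (fun x => Ffun r q x)) 1 = 2 * r * q ∧ 2 * r * q > 0)
    ∧ (deriv (deriv (fun x => Ffun r q x)) ((1 + Real.sqrt q) ^ (1 / r)) =
          -4 * r * q / (1 + Real.sqrt q)
        ∧ -4 * r * q / (1 + Real.sqrt q) < 0)
    ∧ (q < 1 →
        deriv (deriv (fun x => Ffun r q x)) ((1 - Real.sqrt q) ^ (1 / r)) =
            -4 * r * q / (1 - Real.sqrt q)
          ∧ -4 * r * q / (1 - Real.sqrt q) < 0) := by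
  obtain ⟨hr0, hr1⟩ := hr
  set s := Real.sqrt q with hs
  have hs0 : 0 < s := Real.sqrt_pos.mpr hq
  have hsq : s ^ 2 = q := Real.sq_sqrt hq.le
  -- general evaluation lemma at b^(1/r) for b > 0
  have main : ∀ b : ℝ, 0 < b →
      deriv (deriv (fun x => Ffun r q x)) (b ^ (1 / r))
        = 2 * (1 - q) * (1 - 2*r) / (b * b) - 2 * (3 - q) * (1 - r) / b
          + 6 - 2 * (1 + r) * b := by
    intro b hb
    have hg : (0:ℝ) < b ^ (1/r) := Real.rpow_pos_of_pos hb _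
    rw [deriv2_Ffun r q ⟨hr0, hr1⟩ hg]
    have key : ∀ e : ℝ, (b ^ (1/r)) ^ e = b ^ (e / r) := by
      intro e
      rw [← Real.rpow_mul hb.le]
      congr 1
      field_simp
    have e1 : (2 - 2*r - 1 - 1) / r = -2 := by field_simp; ring
    have e2 : (2 - r - 1 - 1) / r = -1 := by field_simp; ring
    have e3 : (2 + r - 1 - 1) / r = 1 := by field_simp; ring
    rw [key, key, key, e1, e2, e3, Real.rpow_one,
      show (-2:ℝ) = -(2:ℕ) by norm_num, show (-1:ℝ) = -(1:ℕ) by norm_num,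
      Real.rpow_neg hb.le, Real.rpow_neg hb.le, Real.rpow_natCast, Real.rpow_natCast]
    have hb' : b ≠ 0 := hb.ne'
    field_simp
    ring
  refine ⟨⟨?_, by positivity⟩, ⟨?_, ?_⟩, fun hq1 => ⟨?_, ?_⟩⟩
  · rw [deriv2_Ffun r q ⟨hr0, hr1⟩ one_pos]
    simp [Real.one_rpow]
    ring
  · have hb : (0:ℝ) < 1 + s := by linarith
    rw [main _ hb]
    have hb' : (1:ℝ) + s ≠ 0 := hb.ne'
    field_simp
    rw [← hsq]
    ring
  · have hb : (0:ℝ) < 1 + s := by linarith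
    apply div_neg_of_neg_of_pos _ hb
    nlinarith
  · have hslt : s < 1 := by
      rw [hs, show (1:ℝ) = Real.sqrt 1 by simp]
      exact Real.sqrt_lt_sqrt hq.le hq1
    have hb : (0:ℝ) < 1 - s := by linarith
    rw [main _ hb]
    have hb' : (1:ℝ) - s ≠ 0 := hb.ne'
    field_simp
    rw [← hsq]
    ring
  · have hslt : s < 1 := by
      rw [hs, show (1:ℝ) = Real.sqrt 1 by simp]
      exact Real.sqrt_lt_sqrt hq.le hq1
    have hb : (0:ℝ) < 1 - s := by linarith
    apply div_neg_of_neg_of_pos _ hb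
    nlinarith
end

section
/- Fix r ∈ (0,1) and q with 0 < q < 1, and let F be as defined. Then the partial derivative ∂F/∂g(g,q) is: strictly positive for g ∈ (0, (1 − √q)^{1/r}); strictly negative for g ∈ ((1 − √q)^{1/r}, 1); strictly positive for g ∈ (1, (1 + √q)^{1/r}); and strictly negative for g > (1 + √q)^{1/r}. -/
lemma Ffun_deriv (r q g : ℝ) (hr0 : 0 < r) (hr1 : r < 1) (hg : 0 < g) :
    deriv (fun x => Ffun r q x) g
      = -2 * g ^ (1 - 2*r) * ((g ^ r - 1) * ((g ^ r - 1) ^ 2 - q)) := by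
  have hne : g ≠ 0 := hg.ne'
  have h1 : HasDerivAt (fun x : ℝ => x ^ (2 - 2*r)) ((2 - 2*r) * g ^ (2 - 2*r - 1)) g :=
    Real.hasDerivAt_rpow_const (Or.inl hne)
  have h2 : HasDerivAt (fun x : ℝ => x ^ (2 - r)) ((2 - r) * g ^ (2 - r - 1)) g :=
    Real.hasDerivAt_rpow_const (Or.inl hne)
  have h3 : HasDerivAt (fun x : ℝ => x ^ (2 : ℝ)) ((2 : ℝ) * g ^ ((2:ℝ) - 1)) g :=
    Real.hasDerivAt_rpow_const (Or.inl hne)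
  have h4 : HasDerivAt (fun x : ℝ => x ^ (2 + r)) ((2 + r) * g ^ (2 + r - 1)) g :=
    Real.hasDerivAt_rpow_const (Or.inl hne)
  have hF : HasDerivAt (fun x => Ffun r q x)
      ((1 - q) / (1 - r) * ((2 - 2*r) * g ^ (2 - 2*r - 1))
        - 2 * (3 - q) / (2 - r) * ((2 - r) * g ^ (2 - r - 1))
        + 3 * ((2 : ℝ) * g ^ ((2:ℝ) - 1))
        - 2 / (2 + r) * ((2 + r) * g ^ (2 + r - 1))) g := by
    unfold Ffun
    exact ((((h1.const_mul _).sub (h2.const_mul _)).add (h3.const_mul _)).sub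
      (h4.const_mul _)).sub_const _
  rw [hF.deriv]
  have e1 : (2 - 2*r - 1 : ℝ) = 1 - 2*r := by ring
  have e2 : (2 - r - 1 : ℝ) = (1 - 2*r) + r := by ring
  have e3 : ((2:ℝ) - 1) = (1 - 2*r) + r + r := by ring
  have e4 : (2 + r - 1 : ℝ) = (1 - 2*r) + r + r + r := by ring
  rw [e1, e2, e3, e4, Real.rpow_add hg, Real.rpow_add hg, Real.rpow_add hg,
    Real.rpow_add hg, Real.rpow_add hg, Real.rpow_add hg]
  have hr1' : (1 - r) ≠ 0 := by linarith
  have hr2' : (2 - r) ≠ 0 := by linarith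
  have hr3' : (2 + r) ≠ 0 := by linarith
  field_simp
  ring

/-- sign pattern of `∂F/∂g(·,q)` on `(0,∞)` for `0 < q < 1`. -/
theorem gmKdV_dF_sign_pattern
    (r q : ℝ) (hr : r ∈ Set.Ioo (0 : ℝ) 1) (hq0 : 0 < q) (hq1 : q < 1) :
    (∀ g : ℝ, 0 < g → g < (1 - Real.sqrt q) ^ (1 / r) →
        0 < deriv (fun x => Ffun r q x) g)
    ∧ (∀ g : ℝ, (1 - Real.sqrt q) ^ (1 / r) < g → g < 1 →
        deriv (fun x => Ffun r q x) g < 0)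
    ∧ (∀ g : ℝ, 1 < g → g < (1 + Real.sqrt q) ^ (1 / r) →
        0 < deriv (fun x => Ffun r q x) g)
    ∧ (∀ g : ℝ, (1 + Real.sqrt q) ^ (1 / r) < g →
        deriv (fun x => Ffun r q x) g < 0) := by
  obtain ⟨hr0, hr1⟩ := hr
  set s := Real.sqrt q with hs
  have hs0 : 0 < s := Real.sqrt_pos.mpr hq0
  have hs2 : s ^ 2 = q := Real.sq_sqrt hq0.le
  have hs1 : s < 1 := by nlinarith
  have hpow : ∀ a : ℝ, 0 < a → (a ^ ((1:ℝ)/r)) ^ r = a := by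
    intro a ha
    rw [← Real.rpow_mul ha.le, one_div, inv_mul_cancel₀ hr0.ne', Real.rpow_one]
  refine ⟨?_, ?_, ?_, ?_⟩
  · intro g hg hlt
    rw [Ffun_deriv r q g hr0 hr1 hg]
    have ha : 0 < g ^ (1 - 2*r) := Real.rpow_pos_of_pos hg _
    have ht : g ^ r < 1 - s := by
      calc g ^ r < ((1 - s) ^ ((1:ℝ)/r)) ^ r := Real.rpow_lt_rpow hg.le hlt hr0
        _ = 1 - s := hpow _ (by linarith)
    have ht0 : 0 < g ^ r := Real.rpow_pos_of_pos hg _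
    set t := g ^ r
    have hX : (t - 1) * ((t - 1) ^ 2 - q) < 0 := by
      rw [← hs2]; nlinarith [mul_pos (mul_pos (show (0:ℝ) < 1 - t by linarith)
        (show (0:ℝ) < 1 - t - s by linarith)) (show (0:ℝ) < 1 - t + s by linarith)]
    nlinarith [mul_pos ha (neg_pos.mpr hX)]
  · intro g hlt hg1
    have hg : 0 < g := lt_trans (Real.rpow_pos_of_pos (by linarith) _) hlt
    rw [Ffun_deriv r q g hr0 hr1 hg]
    have ha : 0 < g ^ (1 - 2*r) := Real.rpow_pos_of_pos hg _
    have ht1 : g ^ r < 1 := Real.rpow_lt_one hg.le hg1 hr0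
    have ht : 1 - s < g ^ r := by
      calc (1 - s) = ((1 - s) ^ ((1:ℝ)/r)) ^ r := (hpow _ (by linarith)).symm
        _ < g ^ r := Real.rpow_lt_rpow (Real.rpow_nonneg (by linarith) _) hlt hr0
    set t := g ^ r
    have hX : 0 < (t - 1) * ((t - 1) ^ 2 - q) := by
      rw [← hs2]; nlinarith [mul_pos (mul_pos (show (0:ℝ) < 1 - t by linarith)
        (show (0:ℝ) < s - (1 - t) by linarith)) (show (0:ℝ) < s + (1 - t) by linarith)]
    nlinarith [mul_pos ha hX]
  · intro g hg1 hlt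
    have hg : 0 < g := lt_trans one_pos hg1
    rw [Ffun_deriv r q g hr0 hr1 hg]
    have ha : 0 < g ^ (1 - 2*r) := Real.rpow_pos_of_pos hg _
    have ht1 : 1 < g ^ r := (Real.one_lt_rpow_iff_of_pos hg).mpr (Or.inl ⟨hg1, hr0⟩)
    have ht : g ^ r < 1 + s := by
      calc g ^ r < ((1 + s) ^ ((1:ℝ)/r)) ^ r := Real.rpow_lt_rpow hg.le hlt hr0
        _ = 1 + s := hpow _ (by linarith)
    set t := g ^ r
    have hX : (t - 1) * ((t - 1) ^ 2 - q) < 0 := by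
      rw [← hs2]; nlinarith [mul_pos (mul_pos (show (0:ℝ) < t - 1 by linarith)
        (show (0:ℝ) < s - (t - 1) by linarith)) (show (0:ℝ) < s + (t - 1) by linarith)]
    nlinarith [mul_pos ha (neg_pos.mpr hX)]
  · intro g hlt
    have hg : 0 < g := lt_trans (Real.rpow_pos_of_pos (by linarith) _) hlt
    rw [Ffun_deriv r q g hr0 hr1 hg]
    have ha : 0 < g ^ (1 - 2*r) := Real.rpow_pos_of_pos hg _
    have ht : 1 + s < g ^ r := by
      calc (1 + s) = ((1 + s) ^ ((1:ℝ)/r)) ^ r := (hpow _ (by linarith)).symm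
        _ < g ^ r := Real.rpow_lt_rpow (Real.rpow_nonneg (by linarith) _) hlt hr0
    set t := g ^ r
    have hX : 0 < (t - 1) * ((t - 1) ^ 2 - q) := by
      rw [← hs2]; nlinarith [mul_pos (mul_pos (show (0:ℝ) < t - 1 by linarith)
        (show (0:ℝ) < t - 1 - s by linarith)) (show (0:ℝ) < t - 1 + s by linarith)]
    nlinarith [mul_pos ha hX]
end

section
/- Fix r ∈ (0,1) and q with 0 < q < 3r²/(2 + r), and let F and C be as defined. Then F(·,q) has at least three zeros on (0,∞): there exists g₀ with 0 < g₀ < (1 − √q)^{1/r} and F(g₀, q) = 0; F(1, q) = 0; and there exists g₁ with g₁ > (1 + √q)^{1/r} and F(g₁, q) = 0. -/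
open Real Filter Set Topology

theorem exists_gt_eq_zero_of_tendsto_atBot {f : ℝ → ℝ} {b : ℝ} (hf : ContinuousOn f (Ici b))
    (hlim : Tendsto f atTop atBot) (hb : 0 < f b) : ∃ x > b, f x = 0 := by
  obtain ⟨G, hfG, hbG⟩ := ((hlim.eventually_lt_atBot 0).and (eventually_gt_atTop b)).exists
  obtain ⟨x, hx, hfx⟩ := intermediate_value_Ioo' hbG.le (hf.mono Icc_subset_Ici_self) ⟨hfG, hb⟩
  exact ⟨x, hx.1, hfx⟩

section Ffun

variable {r q : ℝ}

theorem Ccoef_pos (hr₀ : 0 < r) (hr₁ : r < 1) (hq : q < 3 * r ^ 2 / (2 + r)) :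
    0 < Ccoef r q := by
  have hq' : q * (2 + r) < 3 * r ^ 2 := (lt_div_iff₀ (by linarith)).mp hq
  exact div_pos (by nlinarith) (mul_pos (by linarith) (by nlinarith))

theorem Ffun_one (h₁ : r ≠ 1) (h₂ : r ≠ 2) (h₃ : r ≠ -2) : Ffun r q 1 = 0 := by
  have : 1 - r ≠ 0 := sub_ne_zero.mpr h₁.symm
  have : 2 - r ≠ 0 := sub_ne_zero.mpr h₂.symm
  have : 2 + r ≠ 0 := fun h => h₃ (by linarith)
  have : 4 - r ^ 2 ≠ 0 := by
    rw [show 4 - r ^ 2 = (2 - r) * (2 + r) by ring]; positivity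
  simp only [Ffun, Ccoef, one_rpow]
  field_simp
  ring

theorem Ffun_zero (hr₀ : -2 < r) (hr₁ : r < 1) : Ffun r q 0 = -Ccoef r q := by
  simp [Ffun, zero_rpow (by linarith : 2 - 2 * r ≠ 0), zero_rpow (by linarith : 2 - r ≠ 0),
    zero_rpow (by linarith : 2 + r ≠ 0)]

theorem continuousOn_Ffun (hr₀ : -2 ≤ r) (hr₁ : r ≤ 1) : ContinuousOn (Ffun r q) (Ici 0) := by
  have h : ∀ c : ℝ, 0 ≤ c → ContinuousOn (fun g : ℝ => g ^ c) (Ici 0) := fun c hc x _ =>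
    (continuousAt_rpow_const x c (Or.inr hc)).continuousWithinAt
  have h₁ := h (2 - 2 * r) (by linarith)
  have h₂ := h (2 - r) (by linarith)
  have h₃ := h 2 zero_le_two
  have h₄ := h (2 + r) (by linarith)
  unfold Ffun
  fun_prop

theorem hasDerivAt_Ffun_s8 {s g : ℝ} (h₁ : r ≠ 1) (h₂ : r ≠ 2) (h₃ : r ≠ -2) (hs : s ^ 2 = q)
    (hg : 0 < g) :
    HasDerivAt (Ffun r q)
      (-2 * g ^ (1 - 2 * r) * (g ^ r - 1) * (g ^ r - (1 - s)) * (g ^ r - (1 + s))) g := by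
  have : 1 - r ≠ 0 := sub_ne_zero.mpr h₁.symm
  have : 2 - r ≠ 0 := sub_ne_zero.mpr h₂.symm
  have : 2 + r ≠ 0 := fun h => h₃ (by linarith)
  have hpow : ∀ c : ℝ, HasDerivAt (fun x : ℝ => x ^ c) (c * g ^ (c - 1)) g := fun c =>
    hasDerivAt_rpow_const (Or.inl hg.ne')
  have H := (((((hpow (2 - 2 * r)).const_mul ((1 - q) / (1 - r))).sub
    ((hpow (2 - r)).const_mul (2 * (3 - q) / (2 - r)))).add ((hpow 2).const_mul 3)).sub
    ((hpow (2 + r)).const_mul (2 / (2 + r)))).sub_const (Ccoef r q)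
  refine H.congr_deriv ?_
  have e₁ : g ^ (2 - 2 * r - 1) = g ^ (1 - 2 * r) := by ring_nf
  have e₂ : g ^ (2 - r - 1) = g ^ (1 - 2 * r) * g ^ r := by rw [← rpow_add hg]; ring_nf
  have e₃ : g ^ ((2 : ℝ) - 1) = g ^ (1 - 2 * r) * g ^ r * g ^ r := by
    rw [← rpow_add hg, ← rpow_add hg]; ring_nf
  have e₄ : g ^ (2 + r - 1) = g ^ (1 - 2 * r) * g ^ r * g ^ r * g ^ r := by
    rw [← rpow_add hg, ← rpow_add hg, ← rpow_add hg]; ring_nf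
  rw [e₁, e₂, e₃, e₄, ← hs]
  field_simp
  ring

theorem strictAntiOn_Ffun {s a : ℝ} (hr₀ : 0 < r) (hr₁ : r < 1) (hs : s ^ 2 = q) (ha : 0 ≤ a)
    (har : a ^ r = 1 - s) : StrictAntiOn (Ffun r q) (Icc a 1) := by
  refine strictAntiOn_of_deriv_neg (convex_Icc a 1)
    ((continuousOn_Ffun (by linarith) hr₁.le).mono fun x hx => ha.trans hx.1) fun x hx => ?_
  rw [interior_Icc] at hx
  have hx₀ : 0 < x := ha.trans_lt hx.1
  have ht₁ : x ^ r < 1 := rpow_lt_one hx₀.le hx.2 hr₀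
  have ht₀ : 1 - s < x ^ r := har ▸ rpow_lt_rpow ha hx.1 hr₀
  have hP : 0 < x ^ (1 - 2 * r) := rpow_pos_of_pos hx₀ _
  rw [(hasDerivAt_Ffun_s8 hr₁.ne (by linarith) (by linarith) hs hx₀).deriv]
  have := mul_pos (mul_pos hP (mul_pos_of_neg_of_neg (sub_neg.mpr ht₁)
    (show x ^ r - (1 + s) < 0 by linarith))) (sub_pos.mpr ht₀)
  linarith

theorem strictMonoOn_Ffun {s b : ℝ} (hr₀ : 0 < r) (hr₁ : r < 1) (hs : s ^ 2 = q)
    (hbr : b ^ r = 1 + s) : StrictMonoOn (Ffun r q) (Icc 1 b) := by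
  refine strictMonoOn_of_deriv_pos (convex_Icc 1 b)
    ((continuousOn_Ffun (by linarith) hr₁.le).mono fun x hx => zero_le_one.trans hx.1)
    fun x hx => ?_
  rw [interior_Icc] at hx
  have hx₀ : 0 < x := one_pos.trans hx.1
  have ht₁ : 1 < x ^ r := one_lt_rpow hx.1 hr₀
  have ht₂ : x ^ r < 1 + s := hbr ▸ rpow_lt_rpow hx₀.le hx.2 hr₀
  have hP : 0 < x ^ (1 - 2 * r) := rpow_pos_of_pos hx₀ _
  rw [(hasDerivAt_Ffun_s8 hr₁.ne (by linarith) (by linarith) hs hx₀).deriv]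
  have := mul_pos (mul_pos (mul_pos hP (sub_pos.mpr ht₁))
    (show 0 < x ^ r - (1 - s) by linarith)) (sub_pos.mpr ht₂)
  linarith

theorem tendsto_Ffun_atTop (hr : 0 < r) : Tendsto (Ffun r q) atTop atBot := by
  have hL : Tendsto (fun g : ℝ => (1 - q) / (1 - r) * g ^ (-(3 * r))
      - 2 * (3 - q) / (2 - r) * g ^ (-(2 * r)) + 3 * g ^ (-r) - 2 / (2 + r))
      atTop (𝓝 (-(2 / (2 + r)))) := by
    simpa using ((((tendsto_rpow_neg_atTop (by linarith : 0 < 3 * r)).const_mul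
      ((1 - q) / (1 - r))).sub ((tendsto_rpow_neg_atTop (by linarith : 0 < 2 * r)).const_mul
      (2 * (3 - q) / (2 - r)))).add ((tendsto_rpow_neg_atTop hr).const_mul 3)).sub_const
      (2 / (2 + r))
  have hprod := tendsto_atBot_add_const_right _ (-Ccoef r q)
    ((tendsto_rpow_atTop (by linarith : 0 < 2 + r)).atTop_mul_neg
      (neg_lt_zero.mpr (by positivity)) hL)
  refine hprod.congr' ?_
  filter_upwards [eventually_gt_atTop 0] with g hg
  have e : ∀ c d : ℝ, 2 + r - c = d → g ^ (2 + r) * g ^ (-c) = g ^ d := fun c d h => by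
    rw [← rpow_add hg, ← h, sub_eq_add_neg]
  rw [Ffun]
  linear_combination (1 - q) / (1 - r) * e (3 * r) (2 - 2 * r) (by ring)
    - 2 * (3 - q) / (2 - r) * e (2 * r) (2 - r) (by ring) + 3 * e r 2 (by ring)

end Ffun

/-- for `0 < q < 3r²/(2+r)`, `F(·,q)` has at least three zeros on `(0,∞)`:
one `g₀ ∈ (0, (1−√q)^{1/r})`, the point `g = 1`, and one `g₁ > (1+√q)^{1/r}`. -/
theorem gmKdV_three_zeros
    (r q : ℝ) (hr : r ∈ Set.Ioo (0 : ℝ) 1)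
    (hq0 : 0 < q) (hq1 : q < 3 * r ^ 2 / (2 + r)) :
    (∃ g₀ : ℝ, 0 < g₀ ∧ g₀ < (1 - Real.sqrt q) ^ (1 / r) ∧ Ffun r q g₀ = 0)
    ∧ Ffun r q 1 = 0
    ∧ (∃ g₁ : ℝ, g₁ > (1 + Real.sqrt q) ^ (1 / r) ∧ Ffun r q g₁ = 0) := by
  obtain ⟨hr₀, hr₁⟩ := hr
  have hq : q < 1 := hq1.trans ((div_lt_one (by linarith)).mpr (by nlinarith))
  set s := √q
  have hs : s ^ 2 = q := sq_sqrt hq0.le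
  have hs₀ : 0 < s := sqrt_pos.mpr hq0
  have hs₁ : s < 1 := (sqrt_lt' one_pos).mpr (by linarith)
  set a := (1 - s) ^ (1 / r)
  set b := (1 + s) ^ (1 / r)
  have ha₀ : 0 < a := rpow_pos_of_pos (by linarith) _
  have ha₁ : a < 1 := rpow_lt_one (by linarith) (by linarith) (by positivity)
  have hb₁ : 1 < b := one_lt_rpow (by linarith) (by positivity)
  have har : a ^ r = 1 - s := by simp only [a, one_div]; exact rpow_inv_rpow (by linarith) hr₀.ne'
  have hbr : b ^ r = 1 + s := by simp only [b, one_div]; exact rpow_inv_rpow (by linarith) hr₀.ne'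
  have hF₁ : Ffun r q 1 = 0 := Ffun_one hr₁.ne (by linarith) (by linarith)
  have hFa : 0 < Ffun r q a := hF₁ ▸
    strictAntiOn_Ffun hr₀ hr₁ hs ha₀.le har ⟨le_rfl, ha₁.le⟩ ⟨ha₁.le, le_rfl⟩ ha₁
  have hFb : 0 < Ffun r q b := hF₁ ▸
    strictMonoOn_Ffun hr₀ hr₁ hs hbr ⟨le_rfl, hb₁.le⟩ ⟨hb₁.le, le_rfl⟩ hb₁
  have hF₀ : Ffun r q 0 < 0 := by
    rw [Ffun_zero (by linarith) hr₁, neg_lt_zero]; exact Ccoef_pos hr₀ hr₁ hq1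
  have hcont := continuousOn_Ffun (q := q) (by linarith) hr₁.le
  obtain ⟨g₀, ⟨hg₀, hg₀a⟩, hFg₀⟩ :=
    intermediate_value_Ioo ha₀.le (hcont.mono Icc_subset_Ici_self) ⟨hF₀, hFa⟩
  obtain ⟨g₁, hg₁b, hFg₁⟩ := exists_gt_eq_zero_of_tendsto_atBot
    (hcont.mono (Ici_subset_Ici.mpr (by linarith))) (tendsto_Ffun_atTop hr₀) hFb
  exact ⟨⟨g₀, hg₀, hg₀a, hFg₀⟩, hF₁, ⟨g₁, hg₁b, hFg₁⟩⟩
end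

section
/- Fix r ∈ (0,1) and q ≥ 0, and let F and C be as defined. Then F(1, q) = 0, ∂F/∂g(1, q) = 0, and F(g, q) = rq(g − 1)² + o((g − 1)²) as g → 1; that is, the function g ↦ F(g,q) − rq(g−1)² is little-o of (g−1)² at g = 1. -/
open Asymptotics

/-!
`F` is a combination of powers `g ^ p`, so `F(1) = 0` and `F'(1) = 0` are identities in `r, q`,
and `F''(1) = ∑ cₚ p (p - 1) = 2 r q`. Hence the derivative of `F(g) - r q (g - 1)²` vanishes to
first order at `g = 1`, and the mean value theorem makes the function itself `o((g - 1)²)`.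
-/

open Topology Set

theorem isLittleO_sub_sq_of_hasDerivAt_of_hasDerivAt_zero {E : Type*} [NormedAddCommGroup E]
    [NormedSpace ℝ E] {f f' : ℝ → E} {x₀ : ℝ} (hf : ∀ᶠ x in 𝓝 x₀, HasDerivAt f (f' x) x)
    (hf' : HasDerivAt f' 0 x₀) (hf'₀ : f' x₀ = 0) :
    (fun x ↦ f x - f x₀) =o[𝓝 x₀] fun x ↦ (x - x₀) ^ 2 := by
  obtain ⟨ε, hε, hball⟩ := Metric.eventually_nhds_iff_ball.mp hf
  have hnhds : 𝓝[Metric.ball x₀ ε] x₀ = 𝓝 x₀ :=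
    Metric.isOpen_ball.nhdsWithin_eq (Metric.mem_ball_self hε)
  have hf'_small : f' =o[𝓝 x₀] fun x ↦ (x - x₀) ^ 1 := by
    simpa [hf'₀] using hf'.isLittleO
  rw [← hnhds] at hf'_small ⊢
  exact (convex_ball x₀ ε).isLittleO_pow_succ_real (Metric.mem_ball_self hε)
    (fun x hx ↦ (hball x hx).hasDerivWithinAt) hf'_small

-- `∂F/∂g` with the prefactors cancelled, which is valid for `r ∉ {1, 2, -2}`.
noncomputable def FfunDeriv (r q g : ℝ) : ℝ :=
  2 * (1 - q) * g ^ (1 - 2 * r) - 2 * (3 - q) * g ^ (1 - r) + 6 * g - 2 * g ^ (1 + r)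

theorem Ffun_one_s11 {r : ℝ} (q : ℝ) (hr : r ∈ Ioo (0 : ℝ) 1) : Ffun r q 1 = 0 := by
  obtain ⟨hr0, hr1⟩ := hr
  have h1r : (1 : ℝ) - r ≠ 0 := by linarith
  have h2r : (2 : ℝ) - r ≠ 0 := by linarith
  have h2r' : (2 : ℝ) + r ≠ 0 := by linarith
  have h4r : (4 : ℝ) - r ^ 2 ≠ 0 := by nlinarith
  simp only [Ffun, Ccoef, Real.one_rpow]
  field_simp
  ring

theorem hasDerivAt_Ffun_s11 {r : ℝ} (q : ℝ) (hr : r ∈ Ioo (0 : ℝ) 1) {g : ℝ} (hg : g ≠ 0) :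
    HasDerivAt (Ffun r q) (FfunDeriv r q g) g := by
  obtain ⟨hr0, hr1⟩ := hr
  have h1r : (1 : ℝ) - r ≠ 0 := by linarith
  have h2r : (2 : ℝ) - r ≠ 0 := by linarith
  have h2r' : (2 : ℝ) + r ≠ 0 := by linarith
  have hd := (((((Real.hasDerivAt_rpow_const (p := 2 - 2 * r) (Or.inl hg)).const_mul
    ((1 - q) / (1 - r))).sub
    ((Real.hasDerivAt_rpow_const (p := 2 - r) (Or.inl hg)).const_mul (2 * (3 - q) / (2 - r)))).add
    ((Real.hasDerivAt_rpow_const (p := (2 : ℝ)) (Or.inl hg)).const_mul 3)).sub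
    ((Real.hasDerivAt_rpow_const (p := 2 + r) (Or.inl hg)).const_mul (2 / (2 + r)))).sub_const
    (Ccoef r q)
  refine hd.congr_deriv ?_
  rw [show 2 - 2 * r - 1 = 1 - 2 * r by ring, show 2 - r - 1 = 1 - r by ring,
    show (2 : ℝ) - 1 = 1 by ring, show 2 + r - 1 = 1 + r by ring, Real.rpow_one, FfunDeriv]
  field_simp
  ring

theorem FfunDeriv_one (r q : ℝ) : FfunDeriv r q 1 = 0 := by
  simp only [FfunDeriv, Real.one_rpow]
  ring

theorem hasDerivAt_FfunDeriv_one (r q : ℝ) : HasDerivAt (FfunDeriv r q) (2 * r * q) 1 := by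
  have h1 : (1 : ℝ) ≠ 0 := one_ne_zero
  have hd := (((((Real.hasDerivAt_rpow_const (p := 1 - 2 * r) (Or.inl h1)).const_mul
    (2 * (1 - q))).sub
    ((Real.hasDerivAt_rpow_const (p := 1 - r) (Or.inl h1)).const_mul (2 * (3 - q)))).add
    ((hasDerivAt_id (1 : ℝ)).const_mul 6)).sub
    ((Real.hasDerivAt_rpow_const (p := 1 + r) (Or.inl h1)).const_mul 2))
  refine hd.congr_deriv ?_
  simp only [Real.one_rpow]
  ring

theorem gmKdV_expansion_at_one_general
    (r q : ℝ) (hr : r ∈ Set.Ioo (0 : ℝ) 1) :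
    Ffun r q 1 = 0
    ∧ deriv (fun g => Ffun r q g) 1 = 0
    ∧ (fun g : ℝ => Ffun r q g - r * q * (g - 1) ^ 2) =o[nhds 1]
        (fun g : ℝ => (g - 1) ^ 2) := by
  refine ⟨Ffun_one_s11 q hr, (hasDerivAt_Ffun_s11 q hr one_ne_zero).deriv.trans (FfunDeriv_one r q), ?_⟩
  have hsq (x : ℝ) : HasDerivAt (fun g : ℝ ↦ r * q * (g - 1) ^ 2) (2 * r * q * (x - 1)) x := by
    simpa [mul_comm, mul_left_comm, mul_assoc] using
      (((hasDerivAt_id x).sub_const 1).pow 2).const_mul (r * q)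
  have hderiv : ∀ᶠ x in 𝓝 1, HasDerivAt (fun g ↦ Ffun r q g - r * q * (g - 1) ^ 2)
      (FfunDeriv r q x - 2 * r * q * (x - 1)) x := by
    filter_upwards [lt_mem_nhds one_pos] with x hx
    exact (hasDerivAt_Ffun_s11 q hr hx.ne').sub (hsq x)
  have hderiv' : HasDerivAt (fun x ↦ FfunDeriv r q x - 2 * r * q * (x - 1)) 0 1 := by
    refine ((hasDerivAt_FfunDeriv_one r q).sub
      (((hasDerivAt_id (1 : ℝ)).sub_const 1).const_mul (2 * r * q))).congr_deriv ?_
    ring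
  simpa [Ffun_one_s11 q hr] using
    isLittleO_sub_sq_of_hasDerivAt_of_hasDerivAt_zero hderiv hderiv' (by simp [FfunDeriv_one])

/-- `F(1,q) = 0`, `∂F/∂g(1,q) = 0`, and the second-order expansion
`F(g,q) = rq(g−1)² + o((g−1)²)` as `g → 1`. -/
theorem gmKdV_expansion_at_one
    (r q : ℝ) (hr : r ∈ Set.Ioo (0 : ℝ) 1) (hq : 0 ≤ q) :
    Ffun r q 1 = 0
    ∧ deriv (fun g => Ffun r q g) 1 = 0
    ∧ (fun g : ℝ => Ffun r q g - r * q * (g - 1) ^ 2) =o[nhds 1]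
        (fun g : ℝ => (g - 1) ^ 2) :=
  gmKdV_expansion_at_one_general r q hr
end

section
/- Fix r ∈ (0,1) and set q = 3r²/(2 + r) (so that C(q) = 0). Then for every g > 0, F(g, q) = (2/(2 + r))·g^{2−2r}·(1 − g^r)²·(1 + (3/2)r − g^r). -/
/-- peakon case: for `q = 3r²/(2+r)` (so `C(q) = 0`), `F` factorizes as
`F(g,q) = (2/(2+r))·g^{2−2r}·(1 − g^r)²·(1 + (3/2)r − g^r)` for all `g > 0`. -/
theorem gmKdV_F_factorization_peakon
    (r : ℝ) (hr : r ∈ Set.Ioo (0 : ℝ) 1) (q : ℝ) (hq : q = 3 * r ^ 2 / (2 + r)) :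
    ∀ g : ℝ, 0 < g →
      Ffun r q g =
        2 / (2 + r) * g ^ (2 - 2 * r) * (1 - g ^ r) ^ 2 * (1 + 3 / 2 * r - g ^ r) := by
  obtain ⟨hr0, hr1⟩ := hr
  intro g hg
  have h1r : (1 : ℝ) - r ≠ 0 := by linarith
  have h2r : (2 : ℝ) - r ≠ 0 := by linarith
  have h2r' : (2 : ℝ) + r ≠ 0 := by linarith
  have h4r : (4 : ℝ) - r ^ 2 ≠ 0 := by nlinarith
  have e1 : g ^ (2 - r) = g ^ (2 - 2 * r) * g ^ r := by
    rw [← Real.rpow_add hg]; ring_nf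
  have e2 : g ^ (2 : ℝ) = g ^ (2 - 2 * r) * (g ^ r) ^ 2 := by
    rw [← Real.rpow_natCast (g ^ r) 2, ← Real.rpow_mul hg.le, ← Real.rpow_add hg]
    congr 1; ring
  have e3 : g ^ (2 + r) = g ^ (2 - 2 * r) * (g ^ r) ^ 3 := by
    rw [← Real.rpow_natCast (g ^ r) 3, ← Real.rpow_mul hg.le, ← Real.rpow_add hg]
    congr 1; ring
  rw [Ffun, Ccoef, hq, e1, e2, e3]
  field_simp
  ring
end

section
/- Fix r ∈ (0,1), set ζ = r√(2/(2 + r)), ζ₁ = ζ·√(3r/8), and let c₀ > 0 be the unique positive real with sinh²(c₀) = 3r/2. Define ω : [0,∞) → ℝ by ω(η) = (3r/2)/sinh²(ζ₁η + c₀). Then: (i) ω(0) = 1; (ii) ω'(η) = −ζ·ω(η)·√(ω(η) + 3r/2) for all η ≥ 0; and (iii) ω(η) → 0 as η → ∞. In particular, ω is the right half-profile of the gmKdV peakon, and the even extension ω(|η|) gives the peakon profile. -/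
/-!
With `A = 3r/2` and `u = ζ₁η + c₀`, the profile is `ω = A csch² u`, so `ω' = -2ζ₁ A coth u csch² u`,
while `ω + A = A coth² u` gives `√(ω + A) = √A coth u` as long as `u > 0`. The ODE is thus the
identity `ζ √A = 2ζ₁`, which is how `ζ₁` is defined, and `c₀` is chosen so that `ω(0) = 1`.
-/

open Filter

namespace Real

theorem tendsto_sinh_atTop : Tendsto sinh atTop atTop :=
  tendsto_atTop_mono' atTop
    (by filter_upwards [eventually_ge_atTop 0] with x hx using self_le_sinh_iff.mpr hx)
    tendsto_id

theorem sqrt_div_sinh_sq_add {A u : ℝ} (hA : 0 ≤ A) (hu : 0 < u) :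
    √(A / sinh u ^ 2 + A) = √A * cosh u / sinh u := by
  have hsinh : 0 < sinh u := sinh_pos_iff.mpr hu
  have hsq : A / sinh u ^ 2 + A = (√A * cosh u / sinh u) ^ 2 := by
    rw [div_pow, mul_pow, sq_sqrt hA, cosh_sq]
    field_simp
    ring
  rw [hsq, sqrt_sq (by positivity)]

theorem hasDerivAt_div_sinh_sq (A k c x : ℝ) (hu : k * x + c ≠ 0) :
    HasDerivAt (fun x => A / sinh (k * x + c) ^ 2)
      (-2 * A * k * cosh (k * x + c) / sinh (k * x + c) ^ 3) x := by
  have hsinh : sinh (k * x + c) ≠ 0 := sinh_ne_zero.mpr hu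
  have hlin : HasDerivAt (fun x => k * x + c) k x := by
    simpa using ((hasDerivAt_id x).const_mul k).add_const c
  have hsq : HasDerivAt (fun x => sinh (k * x + c) ^ 2)
      (2 * sinh (k * x + c) * (cosh (k * x + c) * k)) x := by
    simpa using ((hasDerivAt_sinh _).comp x hlin).fun_pow 2
  refine ((hasDerivAt_const x A).fun_div hsq (pow_ne_zero 2 hsinh)).congr_deriv ?_
  field_simp
  ring

theorem tendsto_div_sinh_sq_atTop (A c : ℝ) {k : ℝ} (hk : 0 < k) :
    Tendsto (fun x => A / sinh (k * x + c) ^ 2) atTop (nhds 0) := by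
  have hlin : Tendsto (fun x => k * x + c) atTop atTop :=
    tendsto_atTop_add_const_right _ c (tendsto_id.const_mul_atTop hk)
  have hsinh := tendsto_sinh_atTop.comp hlin
  exact tendsto_const_nhds.div_atTop (by simpa [pow_two] using hsinh.atTop_mul_atTop₀ hsinh)

theorem hasDerivAt_div_sinh_sq_of_mul_sqrt_eq {A k c ζ x : ℝ} (hA : 0 < A) (hζ : ζ * √A = 2 * k)
    (hu : 0 < k * x + c) :
    HasDerivAt (fun x => A / sinh (k * x + c) ^ 2)
      (-ζ * (A / sinh (k * x + c) ^ 2) * √(A / sinh (k * x + c) ^ 2 + A)) x := by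
  refine (hasDerivAt_div_sinh_sq A k c x hu.ne').congr_deriv ?_
  have hsinh : sinh (k * x + c) ≠ 0 := sinh_ne_zero.mpr hu.ne'
  rw [sqrt_div_sinh_sq_add hA.le hu]
  field_simp
  linarith

end Real

/-- the explicit peakon half-profile `ω(η) = (3r/2)/sinh²(ζ₁η + c₀)`
satisfies `ω(0) = 1`, the ODE `ω' = −ζ·ω·√(ω + 3r/2)` on `[0,∞)`, and `ω(η) → 0`
as `η → ∞`. -/
theorem gmKdV_peakon_explicit_profile
    (r ζ ζ₁ c₀ : ℝ) (hr : r ∈ Set.Ioo (0 : ℝ) 1)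
    (hζ : ζ = r * Real.sqrt (2 / (2 + r)))
    (hζ₁ : ζ₁ = ζ * Real.sqrt (3 * r / 8))
    (hc₀pos : 0 < c₀) (hc₀ : Real.sinh c₀ ^ 2 = 3 * r / 2)
    (ω : ℝ → ℝ) (hω : ω = fun η => (3 * r / 2) / Real.sinh (ζ₁ * η + c₀) ^ 2) :
    ω 0 = 1
    ∧ (∀ η : ℝ, 0 ≤ η →
        HasDerivAt ω (-ζ * ω η * Real.sqrt (ω η + 3 * r / 2)) η)
    ∧ Tendsto ω atTop (nhds 0) := by
  obtain ⟨hr0, -⟩ := hr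
  have hA : (0 : ℝ) < 3 * r / 2 := by positivity
  have hζ₁pos : 0 < ζ₁ := by rw [hζ₁, hζ]; positivity
  have hζA : ζ * √(3 * r / 2) = 2 * ζ₁ := by
    rw [hζ₁, show 3 * r / 2 = 2 ^ 2 * (3 * r / 8) by ring, Real.sqrt_mul (by positivity),
      Real.sqrt_sq zero_le_two]
    ring
  subst hω
  refine ⟨by simp [hc₀, hA.ne'], fun η hη => ?_, Real.tendsto_div_sinh_sq_atTop _ _ hζ₁pos⟩
  exact Real.hasDerivAt_div_sinh_sq_of_mul_sqrt_eq hA hζA (by positivity)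
end

section
/- Let α, γ, c₀, c₁, c₂, c₃, ε be real with ε ≠ 0. Let u : ℝ × ℝ → ℝ be a smooth (C^∞) classical solution of the gmKdV equation such that there is a compact set K ⊂ ℝ with u(x,t) = 0 whenever x ∉ K. Then for every t, the function t ↦ ∫_ℝ (u(x,t)² + α²ε²(∂_x u(x,t))²) dx is differentiable and d/dt ∫_ℝ (u² + α²ε²(∂_x u)²) dx = −ε²(2c₂ − c₃) ∫_ℝ (∂_x u)³ dx. -/
open MeasureTheory Metric Set

namespace GmKdVAux

noncomputable def pdx (u : ℝ → ℝ → ℝ) : ℝ → ℝ → ℝ :=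
  fun x t => fderiv ℝ (fun p : ℝ × ℝ => u p.1 p.2) (x, t) (1, 0)

noncomputable def pdt (u : ℝ → ℝ → ℝ) : ℝ → ℝ → ℝ :=
  fun x t => fderiv ℝ (fun p : ℝ × ℝ => u p.1 p.2) (x, t) (0, 1)

variable {u : ℝ → ℝ → ℝ}

lemma smooth_pd (h : ContDiff ℝ (⊤ : ℕ∞) (fun p : ℝ × ℝ => u p.1 p.2)) (v : ℝ × ℝ) :
    ContDiff ℝ (⊤ : ℕ∞) (fun p : ℝ × ℝ => fderiv ℝ (fun q : ℝ × ℝ => u q.1 q.2) p v) :=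
  (h.fderiv_right (by simp)).clm_apply contDiff_const

lemma smooth_pdx (h : ContDiff ℝ (⊤ : ℕ∞) (fun p : ℝ × ℝ => u p.1 p.2)) :
    ContDiff ℝ (⊤ : ℕ∞) (fun p : ℝ × ℝ => pdx u p.1 p.2) :=
  smooth_pd h (1, 0)

lemma smooth_pdt (h : ContDiff ℝ (⊤ : ℕ∞) (fun p : ℝ × ℝ => u p.1 p.2)) :
    ContDiff ℝ (⊤ : ℕ∞) (fun p : ℝ × ℝ => pdt u p.1 p.2) :=
  smooth_pd h (0, 1)

lemma hasDerivAt_x (h : ContDiff ℝ (⊤ : ℕ∞) (fun p : ℝ × ℝ => u p.1 p.2)) (x t : ℝ) :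
    HasDerivAt (fun y => u y t) (pdx u x t) x := by
  have hF : HasFDerivAt (fun p : ℝ × ℝ => u p.1 p.2)
      (fderiv ℝ (fun p : ℝ × ℝ => u p.1 p.2) (x, t)) (x, t) :=
    (h.differentiable (by simp) (x, t)).hasFDerivAt
  have hg : HasDerivAt (fun y : ℝ => (y, t)) ((1 : ℝ), (0 : ℝ)) x :=
    (hasDerivAt_id x).prodMk (hasDerivAt_const x t)
  exact hF.comp_hasDerivAt x hg

lemma hasDerivAt_t (h : ContDiff ℝ (⊤ : ℕ∞) (fun p : ℝ × ℝ => u p.1 p.2)) (x t : ℝ) :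
    HasDerivAt (fun s => u x s) (pdt u x t) t := by
  have hF : HasFDerivAt (fun p : ℝ × ℝ => u p.1 p.2)
      (fderiv ℝ (fun p : ℝ × ℝ => u p.1 p.2) (x, t)) (x, t) :=
    (h.differentiable (by simp) (x, t)).hasFDerivAt
  have hg : HasDerivAt (fun s : ℝ => (x, s)) ((0 : ℝ), (1 : ℝ)) t :=
    (hasDerivAt_const t x).prodMk (hasDerivAt_id t)
  exact hF.comp_hasDerivAt t hg

lemma deriv_x (h : ContDiff ℝ (⊤ : ℕ∞) (fun p : ℝ × ℝ => u p.1 p.2)) (x t : ℝ) :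
    deriv (fun y => u y t) x = pdx u x t := (hasDerivAt_x h x t).deriv

/-- derivatives vanish off a closed support set -/
lemma supp_pd {K : Set ℝ} (hK : IsClosed K) (hs : ∀ x t, x ∉ K → u x t = 0) (v : ℝ × ℝ) :
    ∀ x t : ℝ, x ∉ K → fderiv ℝ (fun q : ℝ × ℝ => u q.1 q.2) (x, t) v = 0 := by
  intro x t hx
  have hev : (fun q : ℝ × ℝ => u q.1 q.2) =ᶠ[nhds (x, t)] fun _ => (0 : ℝ) := by
    have hopen : IsOpen ((Kᶜ : Set ℝ) ×ˢ (univ : Set ℝ)) :=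
      hK.isOpen_compl.prod isOpen_univ
    filter_upwards [hopen.mem_nhds (by exact ⟨hx, trivial⟩)] with q hq
    exact hs q.1 q.2 hq.1
  rw [hev.fderiv_eq]
  simp

lemma supp_pdx {K : Set ℝ} (hK : IsClosed K) (hs : ∀ x t, x ∉ K → u x t = 0) :
    ∀ x t : ℝ, x ∉ K → pdx u x t = 0 := supp_pd hK hs (1, 0)

lemma supp_pdt {K : Set ℝ} (hK : IsClosed K) (hs : ∀ x t, x ∉ K → u x t = 0) :
    ∀ x t : ℝ, x ∉ K → pdt u x t = 0 := supp_pd hK hs (0, 1)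

/-- mixed partials commute for smooth functions -/
lemma pd_comm (h : ContDiff ℝ (⊤ : ℕ∞) (fun p : ℝ × ℝ => u p.1 p.2)) (x t : ℝ) :
    pdx (pdt u) x t = pdt (pdx u) x t := by
  set U : ℝ × ℝ → ℝ := fun p => u p.1 p.2 with hU
  have hdU : ∀ q, HasFDerivAt U (fderiv ℝ U q) q := fun q =>
    (h.differentiable (by simp) q).hasFDerivAt
  have hd2 : HasFDerivAt (fderiv ℝ U) (fderiv ℝ (fderiv ℝ U) (x, t)) (x, t) :=
    (((h.fderiv_right (m := 1) (by exact WithTop.coe_le_coe.mpr le_top)).differentiable (by simp)) (x, t)).hasFDerivAt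
  have key : ∀ v w : ℝ × ℝ,
      fderiv ℝ (fun p : ℝ × ℝ => fderiv ℝ U p w) (x, t) v
        = fderiv ℝ (fderiv ℝ U) (x, t) v w := by
    intro v w
    have h1 : HasFDerivAt (fun p : ℝ × ℝ => fderiv ℝ U p w)
        ((ContinuousLinearMap.apply ℝ ℝ w).comp (fderiv ℝ (fderiv ℝ U) (x, t))) (x, t) :=
      (ContinuousLinearMap.apply ℝ ℝ w).hasFDerivAt.comp (x, t) hd2
    rw [h1.fderiv]
    rfl
  have hsymm := second_derivative_symmetric hdU hd2 (1, 0) (0, 1)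
  show fderiv ℝ (fun p : ℝ × ℝ => fderiv ℝ U p (0, 1)) (x, t) (1, 0)
      = fderiv ℝ (fun p : ℝ × ℝ => fderiv ℝ U p (1, 0)) (x, t) (0, 1)
  rw [key, key, hsymm]


lemma integrable_of_supp {f : ℝ → ℝ} {K : Set ℝ} (hK : IsCompact K)
    (hf : Continuous f) (h0 : ∀ x ∉ K, f x = 0) : Integrable f :=
  hf.integrable_of_hasCompactSupport (HasCompactSupport.intro hK h0)

lemma integral_deriv_eq_zero {f f' : ℝ → ℝ} {K : Set ℝ} (hK : IsCompact K)
    (hd : ∀ x, HasDerivAt f (f' x) x) (hc : Continuous f')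
    (h0 : ∀ x ∉ K, f x = 0) : ∫ x : ℝ, f' x = 0 := by
  obtain ⟨r, hr⟩ := hK.isBounded.subset_closedBall 0
  set a : ℝ := -(|r| + 1) with ha
  set b : ℝ := |r| + 1 with hb
  have hKab : K ⊆ Set.Ioo a b := by
    intro x hx
    have := hr hx
    rw [Metric.mem_closedBall, Real.dist_eq, sub_zero] at this
    have h1 : |x| ≤ |r| := le_trans this (le_abs_self r)
    rw [abs_le] at h1
    constructor <;> [skip; skip] <;> simp [ha, hb] <;> linarith [h1.1, h1.2]
  have hf'0 : ∀ x ∉ K, f' x = 0 := by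
    intro x hx
    have hev : f =ᶠ[nhds x] fun _ => (0 : ℝ) := by
      filter_upwards [hK.isClosed.isOpen_compl.mem_nhds hx] with y hy using h0 y hy
    have h1 : f' x = deriv f x := (hd x).deriv.symm
    rw [h1, hev.deriv_eq, deriv_const]
  have hab : a ≤ b := by have := abs_nonneg r; simp only [ha, hb]; linarith
  have hx0 : ∀ x ∉ Set.Ioc a b, f' x = 0 := by
    intro x hx
    refine hf'0 x fun hxK => hx ?_
    exact Set.Ioo_subset_Ioc_self (hKab hxK)
  rw [← setIntegral_eq_integral_of_forall_compl_eq_zero hx0,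
    ← intervalIntegral.integral_of_le hab,
    intervalIntegral.integral_eq_sub_of_hasDerivAt (fun x _ => hd x)
      (hc.intervalIntegrable a b)]
  have hbK : b ∉ K := fun h => absurd (hKab h).2 (lt_irrefl b)
  have haK : a ∉ K := fun h => absurd (hKab h).1 (lt_irrefl a)
  rw [h0 b hbK, h0 a haK, sub_zero]

lemma integral_parts {f f' g g' : ℝ → ℝ} {K : Set ℝ} (hK : IsCompact K)
    (hdf : ∀ x, HasDerivAt f (f' x) x) (hdg : ∀ x, HasDerivAt g (g' x) x)
    (hcf : Continuous f) (hcg : Continuous g)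
    (hcf' : Continuous f') (hcg' : Continuous g')
    (h0f : ∀ x ∉ K, f x = 0) (h0g : ∀ x ∉ K, g x = 0) :
    ∫ x : ℝ, f x * g' x = -∫ x : ℝ, f' x * g x := by
  have hz : ∫ x : ℝ, (f' x * g x + f x * g' x) = 0 :=
    integral_deriv_eq_zero hK (fun x => (hdf x).mul (hdg x))
      ((hcf'.mul hcg).add (hcf.mul hcg'))
      (fun x hx => by rw [Pi.mul_apply, h0f x hx, zero_mul])
  have i1 : Integrable (fun x => f' x * g x) :=
    integrable_of_supp hK (hcf'.mul hcg) (fun x hx => by rw [h0g x hx, mul_zero])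
  have i2 : Integrable (fun x => f x * g' x) :=
    integrable_of_supp hK (hcf.mul hcg') (fun x hx => by rw [h0f x hx, zero_mul])
  rw [integral_add i1 i2] at hz
  linarith



lemma cont_fix_t {v : ℝ → ℝ → ℝ} (h : ContDiff ℝ (⊤ : ℕ∞) (fun p : ℝ × ℝ => v p.1 p.2)) (t : ℝ) :
    Continuous fun x => v x t :=
  h.continuous.comp (continuous_id.prodMk continuous_const)

lemma contDiff_fix_t {v : ℝ → ℝ → ℝ} (h : ContDiff ℝ (⊤ : ℕ∞) (fun p : ℝ × ℝ => v p.1 p.2)) (t : ℝ) :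
    ContDiff ℝ (⊤ : ℕ∞) fun x => v x t :=
  h.comp (contDiff_id.prodMk contDiff_const)

end GmKdVAux

open GmKdVAux in
/-- balance law: for a smooth, compactly-supported-in-`x` classical solution
`u` of the gmKdV equation, `d/dt ∫ (u² + α²ε²u_x²) dx = −ε²(2c₂ − c₃) ∫ u_x³ dx`. -/
theorem gmKdV_balance_law
    (α γ c₀ c₁ c₂ c₃ ε : ℝ) (hε : ε ≠ 0)
    (u : ℝ → ℝ → ℝ)
    (hsmooth : ContDiff ℝ (⊤ : ℕ∞) (fun p : ℝ × ℝ => u p.1 p.2))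
    (K : Set ℝ) (hK : IsCompact K)
    (hsupp : ∀ x t : ℝ, x ∉ K → u x t = 0)
    (hPDE : ∀ x t : ℝ,
      deriv (fun s : ℝ =>
          u x s - α ^ 2 * ε ^ 2 * deriv (fun y => deriv (fun z => u z s) y) x) t
        + deriv (fun y : ℝ =>
            c₀ * u y t + c₁ * (u y t) ^ 3
              - c₂ * ε ^ 2 * (deriv (fun z => u z t) y) ^ 2
              + ε ^ 2 * (γ - c₃ * u y t) * deriv (fun z => deriv (fun w => u w t) z) y) x
          = 0) :
    ∀ t : ℝ,
      HasDerivAt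
        (fun s : ℝ => ∫ x : ℝ,
          ((u x s) ^ 2 + α ^ 2 * ε ^ 2 * (deriv (fun y => u y s) x) ^ 2))
        (-ε ^ 2 * (2 * c₂ - c₃) * ∫ x : ℝ, (deriv (fun y => u y t) x) ^ 3)
        t := by
  intro t
  have h1 : ContDiff ℝ (⊤ : ℕ∞) (fun p : ℝ × ℝ => pdx u p.1 p.2) := smooth_pdx hsmooth
  have h2 : ContDiff ℝ (⊤ : ℕ∞) (fun p : ℝ × ℝ => pdx (pdx u) p.1 p.2) := smooth_pdx h1
  have hVt : ContDiff ℝ (⊤ : ℕ∞) (fun p : ℝ × ℝ => pdt u p.1 p.2) := smooth_pdt hsmooth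
  have hV1 : ContDiff ℝ (⊤ : ℕ∞) (fun p : ℝ × ℝ => pdt (pdx u) p.1 p.2) := smooth_pdt h1
  have hV2 : ContDiff ℝ (⊤ : ℕ∞) (fun p : ℝ × ℝ => pdt (pdx (pdx u)) p.1 p.2) := smooth_pdt h2
  have hW : ContDiff ℝ (⊤ : ℕ∞) (fun p : ℝ × ℝ => pdx (pdt (pdx u)) p.1 p.2) := smooth_pdx hV1
  have s1 : ∀ x t : ℝ, x ∉ K → pdx u x t = 0 := supp_pdx hK.isClosed hsupp
  have s2 : ∀ x t : ℝ, x ∉ K → pdx (pdx u) x t = 0 := supp_pdx hK.isClosed s1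
  have sg : ∀ x t : ℝ, x ∉ K → pdt u x t = 0 := supp_pdt hK.isClosed hsupp
  have sg1 : ∀ x t : ℝ, x ∉ K → pdt (pdx u) x t = 0 := supp_pdt hK.isClosed s1
  have sg2 : ∀ x t : ℝ, x ∉ K → pdt (pdx (pdx u)) x t = 0 := supp_pdt hK.isClosed s2
  have sW : ∀ x t : ℝ, x ∉ K → pdx (pdt (pdx u)) x t = 0 := supp_pdx hK.isClosed sg1
  have cf : Continuous fun x => u x t := cont_fix_t hsmooth t
  have cf1 : Continuous fun x => pdx u x t := cont_fix_t h1 t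
  have cf2 : Continuous fun x => pdx (pdx u) x t := cont_fix_t h2 t
  have cg : Continuous fun x => pdt u x t := cont_fix_t hVt t
  have cg1 : Continuous fun x => pdt (pdx u) x t := cont_fix_t hV1 t
  have cg2 : Continuous fun x => pdt (pdx (pdx u)) x t := cont_fix_t hV2 t
  have cW : Continuous fun x => pdx (pdt (pdx u)) x t := cont_fix_t hW t
  simp only [deriv_x hsmooth, deriv_x h1] at hPDE ⊢
  -- differentiation under the integral sign
  have main : HasDerivAt
      (fun s => ∫ x : ℝ, (u x s ^ 2 + α ^ 2 * ε ^ 2 * pdx u x s ^ 2))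
      (∫ x : ℝ, (2 * (u x t * pdt u x t)
        + α ^ 2 * ε ^ 2 * (2 * (pdx u x t * pdt (pdx u) x t)))) t := by
    have hcF' : Continuous fun p : ℝ × ℝ => 2 * (u p.1 p.2 * pdt u p.1 p.2)
        + α ^ 2 * ε ^ 2 * (2 * (pdx u p.1 p.2 * pdt (pdx u) p.1 p.2)) :=
      (continuous_const.mul (hsmooth.continuous.mul hVt.continuous)).add
        (continuous_const.mul (continuous_const.mul (h1.continuous.mul hV1.continuous)))
    obtain ⟨C, hC⟩ := (hK.prod (isCompact_Icc (a := t - 1)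
      (b := t + 1))).exists_bound_of_continuousOn hcF'.continuousOn
    refine (hasDerivAt_integral_of_dominated_loc_of_deriv_le (μ := volume) (x₀ := t)
      (F := fun s x => u x s ^ 2 + α ^ 2 * ε ^ 2 * pdx u x s ^ 2)
      (F' := fun s x => 2 * (u x s * pdt u x s)
        + α ^ 2 * ε ^ 2 * (2 * (pdx u x s * pdt (pdx u) x s)))
      (bound := K.indicator fun _ => C) (ball_mem_nhds t one_pos) ?_ ?_ ?_ ?_ ?_ ?_).2
    · refine Filter.Eventually.of_forall fun s => ?_
      exact (((cont_fix_t hsmooth s).pow 2).add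
        (continuous_const.mul ((cont_fix_t h1 s).pow 2))).aestronglyMeasurable
    · refine integrable_of_supp hK (((cont_fix_t hsmooth t).pow 2).add
        (continuous_const.mul ((cont_fix_t h1 t).pow 2))) fun x hx => ?_
      simp only [hsupp x t hx, s1 x t hx]; ring
    · exact ((continuous_const.mul (cf.mul cg)).add
        (continuous_const.mul (continuous_const.mul (cf1.mul cg1)))).aestronglyMeasurable
    · refine Filter.Eventually.of_forall fun x s hs => ?_
      by_cases hx : x ∈ K
      · rw [Set.indicator_of_mem hx]
        have hsI : s ∈ Set.Icc (t - 1) (t + 1) := by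
          rw [Metric.mem_ball, Real.dist_eq] at hs
          have h := abs_lt.mp hs
          exact ⟨by linarith [h.1], by linarith [h.2]⟩
        exact hC (x, s) ⟨hx, hsI⟩
      · rw [Set.indicator_of_notMem hx]
        simp only [hsupp x s hx, s1 x s hx]
        simp
    · rw [integrable_indicator_iff hK.measurableSet]
      exact integrableOn_const hK.measure_lt_top.ne
    · refine Filter.Eventually.of_forall fun x s _ => ?_
      have d1 := (hasDerivAt_t hsmooth x s).fun_pow 2
      have d2 := ((hasDerivAt_t h1 x s).fun_pow 2).const_mul (α ^ 2 * ε ^ 2)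
      have := d1.fun_add d2
      convert this using 1
      norm_num
      ring
  -- reduce to an integral identity
  suffices hEQ : (∫ x : ℝ, (2 * (u x t * pdt u x t)
      + α ^ 2 * ε ^ 2 * (2 * (pdx u x t * pdt (pdx u) x t))))
      = -ε ^ 2 * (2 * c₂ - c₃) * ∫ x : ℝ, pdx u x t ^ 3 by
    rw [← hEQ]; exact main
  -- named function G: the flux
  set G : ℝ → ℝ := fun y => c₀ * u y t + c₁ * u y t ^ 3 - c₂ * ε ^ 2 * pdx u y t ^ 2
      + ε ^ 2 * (γ - c₃ * u y t) * pdx (pdx u) y t with hGdef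
  have hPDE' : ∀ x : ℝ, deriv G x
      = -(pdt u x t - α ^ 2 * ε ^ 2 * pdt (pdx (pdx u)) x t) := by
    intro x
    have h := hPDE x t
    rw [← hGdef] at h
    have hd : deriv (fun s => u x s - α ^ 2 * ε ^ 2 * pdx (pdx u) x s) t
        = pdt u x t - α ^ 2 * ε ^ 2 * pdt (pdx (pdx u)) x t := ((hasDerivAt_t hsmooth x t).sub
      ((hasDerivAt_t h2 x t).const_mul (α ^ 2 * ε ^ 2))).deriv
    rw [hd] at h
    linarith
  have hGsm : ContDiff ℝ (⊤ : ℕ∞) G := by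
    rw [hGdef]
    exact (((contDiff_const.mul (contDiff_fix_t hsmooth t)).add
      (contDiff_const.mul ((contDiff_fix_t hsmooth t).pow 3))).sub
      (contDiff_const.mul ((contDiff_fix_t h1 t).pow 2))).add
      ((contDiff_const.mul (contDiff_const.sub
        (contDiff_const.mul (contDiff_fix_t hsmooth t)))).mul (contDiff_fix_t h2 t))
  have hGd : ∀ x, HasDerivAt G (deriv G x) x := fun x =>
    (hGsm.differentiable (by simp) x).hasDerivAt
  have hGc : Continuous G := hGsm.continuous
  have hG'c : Continuous (deriv G) := (contDiff_infty_iff_deriv.mp (hGsm.of_le (by simp))).2.continuous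
  have hG0 : ∀ x ∉ K, G x = 0 := by
    intro x hx
    rw [hGdef]
    simp only [hsupp x t hx, s1 x t hx, s2 x t hx]
    ring
  -- integrability of the building blocks
  have iA1 : Integrable fun x => u x t * pdx u x t :=
    integrable_of_supp hK (cf.mul cf1) fun x hx => by rw [hsupp x t hx, zero_mul]
  have iA2 : Integrable fun x => u x t ^ 3 * pdx u x t :=
    integrable_of_supp hK ((cf.pow 3).mul cf1) fun x hx => by rw [s1 x t hx, mul_zero]
  have iA3 : Integrable fun x => pdx u x t ^ 3 :=
    integrable_of_supp hK (cf1.pow 3) fun x hx => by simp only [s1 x t hx]; ring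
  have iA4 : Integrable fun x => pdx u x t * pdx (pdx u) x t :=
    integrable_of_supp hK (cf1.mul cf2) fun x hx => by rw [s1 x t hx, zero_mul]
  have iA5 : Integrable fun x => u x t * (pdx u x t * pdx (pdx u) x t) :=
    integrable_of_supp hK (cf.mul (cf1.mul cf2)) fun x hx => by rw [hsupp x t hx, zero_mul]
  have iB1 : Integrable fun x => u x t * pdt u x t :=
    integrable_of_supp hK (cf.mul cg) fun x hx => by rw [hsupp x t hx, zero_mul]
  have iB2 : Integrable fun x => pdx u x t * pdt (pdx u) x t :=
    integrable_of_supp hK (cf1.mul cg1) fun x hx => by rw [s1 x t hx, zero_mul]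
  have iB3 : Integrable fun x => u x t * pdt (pdx (pdx u)) x t :=
    integrable_of_supp hK (cf.mul cg2) fun x hx => by rw [hsupp x t hx, zero_mul]
  -- integration by parts identities
  have P1 : ∫ x : ℝ, pdx u x t * pdt (pdx u) x t
      = -∫ x : ℝ, u x t * pdt (pdx (pdx u)) x t := by
    have h := integral_parts hK (f := fun x => pdt (pdx u) x t)
      (f' := fun x => pdx (pdt (pdx u)) x t) (g := fun x => u x t)
      (g' := fun x => pdx u x t)
      (fun x => hasDerivAt_x hV1 x t) (fun x => hasDerivAt_x hsmooth x t)
      cg1 cf cW cf1 (fun x hx => sg1 x t hx) (fun x hx => hsupp x t hx)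
    have e1 : (fun x => pdx u x t * pdt (pdx u) x t)
        = fun x => pdt (pdx u) x t * pdx u x t := by funext x; ring
    have e2 : (fun x => pdx (pdt (pdx u)) x t * u x t)
        = fun x => u x t * pdt (pdx (pdx u)) x t := by
      funext x; rw [pd_comm h1 x t]; ring
    rw [e1, h, e2]
  have P2 : ∫ x : ℝ, u x t * deriv G x = -∫ x : ℝ, pdx u x t * G x :=
    integral_parts hK (fun x => hasDerivAt_x hsmooth x t) hGd cf hGc cf1 hG'c
      (fun x hx => hsupp x t hx) hG0
  -- the PDE relation, integrated against u
  have PDErel : (∫ x : ℝ, u x t * pdt u x t)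
      - α ^ 2 * ε ^ 2 * ∫ x : ℝ, u x t * pdt (pdx (pdx u)) x t
      = -∫ x : ℝ, u x t * deriv G x := by
    have e : (fun x => u x t * pdt u x t
        - α ^ 2 * ε ^ 2 * (u x t * pdt (pdx (pdx u)) x t))
        = fun x => -(u x t * deriv G x) := by
      funext x
      rw [hPDE' x]
      ring
    calc (∫ x : ℝ, u x t * pdt u x t)
        - α ^ 2 * ε ^ 2 * ∫ x : ℝ, u x t * pdt (pdx (pdx u)) x t
        = ∫ x : ℝ, (u x t * pdt u x t
            - α ^ 2 * ε ^ 2 * (u x t * pdt (pdx (pdx u)) x t)) := by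
          rw [integral_sub iB1 (iB3.const_mul _), integral_const_mul]
      _ = ∫ x : ℝ, -(u x t * deriv G x) := by rw [e]
      _ = -∫ x : ℝ, u x t * deriv G x := by rw [integral_neg]
  -- expansion of ∫ u_x * G
  have EXP : ∫ x : ℝ, pdx u x t * G x
      = c₀ * (∫ x : ℝ, u x t * pdx u x t) + c₁ * (∫ x : ℝ, u x t ^ 3 * pdx u x t)
        - c₂ * ε ^ 2 * (∫ x : ℝ, pdx u x t ^ 3)
        + ε ^ 2 * γ * (∫ x : ℝ, pdx u x t * pdx (pdx u) x t)
        - ε ^ 2 * c₃ * ∫ x : ℝ, u x t * (pdx u x t * pdx (pdx u) x t) := by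
    have e : (fun x => pdx u x t * G x) = fun x =>
        c₀ * (u x t * pdx u x t) + c₁ * (u x t ^ 3 * pdx u x t)
          - c₂ * ε ^ 2 * pdx u x t ^ 3
          + ε ^ 2 * γ * (pdx u x t * pdx (pdx u) x t)
          - ε ^ 2 * c₃ * (u x t * (pdx u x t * pdx (pdx u) x t)) := by
      funext x; rw [hGdef]; ring
    have j1 : Integrable fun x => c₀ * (u x t * pdx u x t) := iA1.const_mul c₀
    have j2 : Integrable fun x => c₁ * (u x t ^ 3 * pdx u x t) := iA2.const_mul c₁
    have j3 : Integrable fun x => c₂ * ε ^ 2 * pdx u x t ^ 3 := iA3.const_mul _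
    have j4 : Integrable fun x => ε ^ 2 * γ * (pdx u x t * pdx (pdx u) x t) :=
      iA4.const_mul _
    have j5 : Integrable fun x => ε ^ 2 * c₃ * (u x t * (pdx u x t * pdx (pdx u) x t)) :=
      iA5.const_mul _
    have j12 : Integrable fun x => c₀ * (u x t * pdx u x t)
        + c₁ * (u x t ^ 3 * pdx u x t) := j1.add j2
    have j123 : Integrable fun x => c₀ * (u x t * pdx u x t)
        + c₁ * (u x t ^ 3 * pdx u x t) - c₂ * ε ^ 2 * pdx u x t ^ 3 := j12.sub j3
    have j1234 : Integrable fun x => c₀ * (u x t * pdx u x t)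
        + c₁ * (u x t ^ 3 * pdx u x t) - c₂ * ε ^ 2 * pdx u x t ^ 3
        + ε ^ 2 * γ * (pdx u x t * pdx (pdx u) x t) := j123.add j4
    rw [e, integral_sub j1234 j5, integral_add j123 j4, integral_sub j12 j3,
      integral_add j1 j2, integral_const_mul, integral_const_mul, integral_const_mul,
      integral_const_mul, integral_const_mul]
  -- vanishing integrals of exact derivatives
  have Z1 : ∫ x : ℝ, u x t * pdx u x t = 0 := by
    have hz : ∫ x : ℝ, 2 * (u x t * pdx u x t) = 0 := by
      refine integral_deriv_eq_zero hK (f := fun x => u x t ^ 2) (fun x => ?_)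
        (continuous_const.mul (cf.mul cf1)) (fun x hx => by simp only [hsupp x t hx]; ring)
      have h := (hasDerivAt_x hsmooth x t).fun_pow 2
      refine h.congr_deriv ?_
      norm_num; ring
    rw [integral_const_mul] at hz
    linarith
  have Z2 : ∫ x : ℝ, u x t ^ 3 * pdx u x t = 0 := by
    have hz : ∫ x : ℝ, 4 * (u x t ^ 3 * pdx u x t) = 0 := by
      refine integral_deriv_eq_zero hK (f := fun x => u x t ^ 4) (fun x => ?_)
        (continuous_const.mul ((cf.pow 3).mul cf1))
        (fun x hx => by simp only [hsupp x t hx]; ring)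
      have h := (hasDerivAt_x hsmooth x t).fun_pow 4
      refine h.congr_deriv ?_
      norm_num; ring
    rw [integral_const_mul] at hz
    linarith
  have Z3 : ∫ x : ℝ, pdx u x t * pdx (pdx u) x t = 0 := by
    have hz : ∫ x : ℝ, 2 * (pdx u x t * pdx (pdx u) x t) = 0 := by
      refine integral_deriv_eq_zero hK (f := fun x => pdx u x t ^ 2) (fun x => ?_)
        (continuous_const.mul (cf1.mul cf2)) (fun x hx => by simp only [s1 x t hx]; ring)
      have h := (hasDerivAt_x h1 x t).fun_pow 2
      refine h.congr_deriv ?_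
      norm_num; ring
    rw [integral_const_mul] at hz
    linarith
  have Z4 : (∫ x : ℝ, pdx u x t ^ 3)
      + 2 * ∫ x : ℝ, u x t * (pdx u x t * pdx (pdx u) x t) = 0 := by
    have hz : ∫ x : ℝ, (pdx u x t ^ 3
        + 2 * (u x t * (pdx u x t * pdx (pdx u) x t))) = 0 := by
      refine integral_deriv_eq_zero hK (f := fun x => u x t * pdx u x t ^ 2)
        (fun x => ?_) ((cf1.pow 3).add (continuous_const.mul (cf.mul (cf1.mul cf2))))
        (fun x hx => by simp only [hsupp x t hx]; ring)
      have h := (hasDerivAt_x hsmooth x t).fun_mul ((hasDerivAt_x h1 x t).fun_pow 2)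
      refine h.congr_deriv ?_
      norm_num; ring
    rw [integral_add iA3 (iA5.const_mul 2), integral_const_mul] at hz
    linarith
  -- assemble
  have split0 : ∫ x : ℝ, (2 * (u x t * pdt u x t)
      + α ^ 2 * ε ^ 2 * (2 * (pdx u x t * pdt (pdx u) x t)))
      = 2 * (∫ x : ℝ, u x t * pdt u x t)
        + α ^ 2 * ε ^ 2 * (2 * ∫ x : ℝ, pdx u x t * pdt (pdx u) x t) := by
    rw [integral_add (iB1.const_mul 2) ((iB2.const_mul 2).const_mul _),
      integral_const_mul, integral_const_mul, integral_const_mul]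
  rw [split0, P1]
  linear_combination 2 * PDErel - 2 * P2 + 2 * EXP + 2 * c₀ * Z1 + 2 * c₁ * Z2
    + 2 * ε ^ 2 * γ * Z3 - ε ^ 2 * c₃ * Z4
end
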